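/- Properties (S1) and (S4) are mutually exclusive: if the 1×n pattern vector A₁ is independent of col(A₂, C) (where A₂ is an (n-1)×n pattern matrix of full row rank and C is a 1×n pattern vector), then C is not independent of A₂. -/

import Mathlib

inductive PSym | zero | star | any
deriving DecidableEq

namespace PSym

def symAdd : PSym → PSym → PSym
  | zero, x => x
  | x, zero => x
  | _, _ => any

def symMul : PSym → PSym → PSym
  | zero, _ => zero
  | _, zero => zero
  | star, star => star
  | _, _ => any

instance : Zero PSym := ⟨zero⟩
instance : Add PSym := ⟨symAdd⟩

instance : AddCommMonoid PSym where
  add_assoc a b c := by cases a <;> cases b <;> cases c <;> rfl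
  zero_add a := by cases a <;> rfl
  add_zero a := by cases a <;> rfl
  add_comm a b := by cases a <;> cases b <;> rfl
  nsmul := nsmulRec

end PSym

/-- The pattern class of a pattern matrix. -/
def PatClass {p q : Type*} (M : Matrix p q PSym) : Set (Matrix p q ℝ) :=
  {A | ∀ i j, (M i j = PSym.zero → A i j = 0) ∧ (M i j = PSym.star → A i j ≠ 0)}

/-- Product of pattern matrices. -/
def patMul {p q s : ℕ} (M : Matrix (Fin p) (Fin q) PSym) (N : Matrix (Fin q) (Fin s) PSym) :
    Matrix (Fin p) (Fin s) PSym :=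
  fun i j => ∑ k, PSym.symMul (M i k) (N k j)

/-- A 1×q pattern vector `M` is independent of an r×q pattern matrix `N`. -/
def Independent {q r : ℕ} (M : Matrix (Fin 1) (Fin q) PSym) (N : Matrix (Fin r) (Fin q) PSym) : Prop :=
  ∀ M₀ ∈ PatClass M, ∀ N₀ ∈ PatClass N, ∀ (z₁ : ℝ) (z₂ : Fin r → ℝ),
    (∀ j, z₁ * M₀ 0 j + ∑ i, z₂ i * N₀ i j = 0) → z₁ = 0

/-!
Take instances `A₂₀`, `C₀` of `A₂`, `C`. If `C` were independent of `A₂`, then `C₀` would lie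
outside the row space of `A₂₀`, so the `n + 1` rows of `col(A₂₀, C₀)` would be linearly
independent in `ℝⁿ⁺¹` and hence span it. Every instance of `A₁` would then be a combination of
these rows, i.e. satisfy a relation with coefficient `1` on `A₁`, against the independence of
`A₁` from `col(A₂, C)`.
-/

theorem PatClass.nonempty {p q : Type*} (M : Matrix p q PSym) : (PatClass M).Nonempty :=
  ⟨fun i j => if M i j = PSym.star then 1 else 0, fun i j =>
    ⟨fun h => by simp [h], fun h => by simp [h]⟩⟩

theorem snoc_mem_patClass {n q : ℕ} {A : Matrix (Fin n) (Fin q) PSym}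
    {c : Matrix (Fin 1) (Fin q) PSym} {A₀ : Matrix (Fin n) (Fin q) ℝ}
    {c₀ : Matrix (Fin 1) (Fin q) ℝ} (hA : A₀ ∈ PatClass A) (hc : c₀ ∈ PatClass c) :
    (Matrix.of (Fin.snoc (fun i => A₀ i) (c₀ 0)) : Matrix (Fin (n + 1)) (Fin q) ℝ) ∈
      PatClass (Matrix.of (Fin.snoc (fun i => A i) (c 0))) := by
  intro i j
  induction i using Fin.lastCases with
  | last => simpa only [Matrix.of_apply, Fin.snoc_last] using hc 0 j
  | cast i => simpa only [Matrix.of_apply, Fin.snoc_castSucc] using hA i j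

theorem Independent.notMem_span {q r : ℕ} {M : Matrix (Fin 1) (Fin q) PSym}
    {N : Matrix (Fin r) (Fin q) PSym} (h : Independent M N) {M₀ : Matrix (Fin 1) (Fin q) ℝ}
    {N₀ : Matrix (Fin r) (Fin q) ℝ} (hM₀ : M₀ ∈ PatClass M) (hN₀ : N₀ ∈ PatClass N) :
    M₀ 0 ∉ Submodule.span ℝ (Set.range fun i => N₀ i) := by
  rw [Submodule.mem_span_range_iff_exists_fun]
  rintro ⟨c, hc⟩
  refine one_ne_zero (h M₀ hM₀ N₀ hN₀ 1 (-c) fun j => ?_)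
  have hcj : ∑ i, c i * N₀ i j = M₀ 0 j := by simpa using congrFun hc j
  simp only [Pi.neg_apply, neg_mul, Finset.sum_neg_distrib, hcj]
  ring

/-- (S1) and (S4) are mutually exclusive: if `A₁` is independent
of `col(A₂, C)` with `A₂` of full row rank, then `C` is not independent of
`A₂`. -/
theorem S1_excludes_S4 {n : ℕ}
    (A₁ : Matrix (Fin 1) (Fin (n + 1)) PSym) (A₂ : Matrix (Fin n) (Fin (n + 1)) PSym)
    (C : Matrix (Fin 1) (Fin (n + 1)) PSym)
    (hA₂ : ∀ A₂₀ ∈ PatClass A₂, LinearIndependent ℝ (fun i : Fin n => A₂₀ i))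
    (hInd : Independent A₁
      (Matrix.of (Fin.snoc (fun i => A₂ i) (C 0)) : Matrix (Fin (n + 1)) (Fin (n + 1)) PSym)) :
    ¬ Independent C A₂ := by
  intro hC
  obtain ⟨A₁₀, hA₁₀⟩ := PatClass.nonempty A₁
  obtain ⟨A₂₀, hA₂₀⟩ := PatClass.nonempty A₂
  obtain ⟨C₀, hC₀⟩ := PatClass.nonempty C
  have hrows : LinearIndependent ℝ (Fin.snoc (fun i => A₂₀ i) (C₀ 0)) :=
    (hA₂ A₂₀ hA₂₀).finSnoc (hC.notMem_span hC₀ hA₂₀)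
  have hspan : Submodule.span ℝ (Set.range (Fin.snoc (fun i => A₂₀ i) (C₀ 0))) = ⊤ :=
    hrows.span_eq_top_of_card_eq_finrank (by simp)
  exact hInd.notMem_span hA₁₀ (snoc_mem_patClass hA₂₀ hC₀) (hspan ▸ Submodule.mem_top)
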